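/- arXiv:1410.5076 — 4 statements merged into one kernel-verified Lean document; each statement's English description precedes it below -/
import Mathlib

section
/- Let f: X → ℝ be convex and differentiable on a convex set X ⊆ ℝⁿ, and let x̂ be a minimizer over X of the function x ↦ f(x) + ⟨x - x₀, p⟩ + ⟨x - x₀, g⟩ + τ‖x - x₀‖² with τ > 0, where x₀ ∈ X and p, g are fixed vectors. Then ⟨x̂ - x₀, ∇f(x₀) + p + g⟩ ≤ -τ‖x̂ - x₀‖². -/
/-!
Convexity of `f` along the segment from `x₀` to `x̂` gives the supporting-hyperplane inequality
`⟪∇f(x₀), x̂ - x₀⟫ ≤ f(x̂) - f(x₀)`. Comparing the value of the surrogate at its minimizer `x̂`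
with its value `f(x₀)` at `x₀` bounds `f(x̂) - f(x₀)` by `-⟪x̂ - x₀, p + q⟫ - τ‖x̂ - x₀‖²`.
-/

open RealInnerProductSpace

theorem ConvexOn.le_sub_of_hasFDerivAt {E : Type*} [NormedAddCommGroup E] [NormedSpace ℝ E]
    {s : Set E} {f : E → ℝ} {f' : E →L[ℝ] ℝ} {x y : E} (hf : ConvexOn ℝ s f)
    (hx : x ∈ s) (hy : y ∈ s) (hf' : HasFDerivAt f f' x) :
    f' (y - x) ≤ f y - f x := by
  let L : ℝ →ᵃ[ℝ] E := AffineMap.lineMap x y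
  have hline : ConvexOn ℝ (L ⁻¹' s) (f ∘ L) := hf.comp_affineMap L
  have hderiv : HasDerivAt (f ∘ L) (f' (y - x)) 0 := by
    apply HasFDerivAt.comp_hasDerivAt (0 : ℝ) _ AffineMap.hasDerivAt_lineMap
    simpa using hf'
  simpa [L, slope_def_field] using
    hline.le_slope_of_hasDerivAt (by simpa [L] using hx) (by simpa [L] using hy) one_pos hderiv

theorem ConvexOn.inner_le_sub_of_hasGradientAt {E : Type*} [NormedAddCommGroup E]
    [InnerProductSpace ℝ E] [CompleteSpace E] {s : Set E} {f : E → ℝ} {f' x y : E}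
    (hf : ConvexOn ℝ s f) (hx : x ∈ s) (hy : y ∈ s) (hf' : HasGradientAt f f' x) :
    ⟪f', y - x⟫ ≤ f y - f x := by
  simpa using hf.le_sub_of_hasFDerivAt hx hy hf'.hasFDerivAt

theorem stmt2_general {n : ℕ} (X : Set (EuclideanSpace ℝ (Fin n)))
    (f : EuclideanSpace ℝ (Fin n) → ℝ)
    (g : EuclideanSpace ℝ (Fin n) → EuclideanSpace ℝ (Fin n))
    (hconv : ConvexOn ℝ X f)
    (hg : ∀ x ∈ X, HasGradientAt f (g x) x)
    (x₀ : EuclideanSpace ℝ (Fin n)) (hx₀ : x₀ ∈ X)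
    (p q : EuclideanSpace ℝ (Fin n)) (τ : ℝ)
    (xhat : EuclideanSpace ℝ (Fin n)) (hxhat : xhat ∈ X)
    (hmin : IsMinOn (fun x => f x + ⟪x - x₀, p⟫ + ⟪x - x₀, q⟫ + τ * ‖x - x₀‖ ^ 2) X xhat) :
    ⟪xhat - x₀, g x₀ + p + q⟫ ≤ -τ * ‖xhat - x₀‖ ^ 2 := by
  have hsupport : ⟪g x₀, xhat - x₀⟫ ≤ f xhat - f x₀ :=
    hconv.inner_le_sub_of_hasGradientAt hx₀ hxhat (hg x₀ hx₀)
  have hcompare : f xhat + ⟪xhat - x₀, p⟫ + ⟪xhat - x₀, q⟫ + τ * ‖xhat - x₀‖ ^ 2 ≤ f x₀ := by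
    simpa using hmin hx₀
  rw [inner_add_right, inner_add_right, real_inner_comm]
  linarith

/-- First-order optimality for the strongly convex surrogate: if `x̂` minimizes
`x ↦ f(x) + ⟨x-x₀,p⟩ + ⟨x-x₀,q⟩ + τ‖x-x₀‖²` over a convex set `X`, with `f`
convex and differentiable, then `⟨x̂-x₀, ∇f(x₀)+p+q⟩ ≤ -τ‖x̂-x₀‖²`. -/
theorem stmt2 {n : ℕ} (X : Set (EuclideanSpace ℝ (Fin n)))
    (hX : Convex ℝ X) (f : EuclideanSpace ℝ (Fin n) → ℝ)
    (g : EuclideanSpace ℝ (Fin n) → EuclideanSpace ℝ (Fin n))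
    (hconv : ConvexOn ℝ X f)
    (hg : ∀ x ∈ X, HasGradientAt f (g x) x)
    (x₀ : EuclideanSpace ℝ (Fin n)) (hx₀ : x₀ ∈ X)
    (p q : EuclideanSpace ℝ (Fin n)) (τ : ℝ) (hτ : 0 < τ)
    (xhat : EuclideanSpace ℝ (Fin n)) (hxhat : xhat ∈ X)
    (hmin : IsMinOn (fun x => f x + ⟪x - x₀, p⟫ + ⟪x - x₀, q⟫ + τ * ‖x - x₀‖ ^ 2) X xhat) :
    ⟪xhat - x₀, g x₀ + p + q⟫ ≤ -τ * ‖xhat - x₀‖ ^ 2 :=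
  stmt2_general X f g hconv hg x₀ hx₀ p q τ xhat hxhat hmin
end

section
/- Let U: ℝⁿ → ℝ be differentiable with L-Lipschitz gradient, and suppose x^{t+1} = x^t + γ(x̂^t - x^t) with γ ∈ (0,1], and ⟨x̂^t - x^t, f^t⟩ ≤ -τ‖x̂^t - x^t‖² for some vector f^t and τ > 0. Then U(x^{t+1}) ≤ U(x^t) - γ(τ - Lγ)‖x̂^t - x^t‖² + γ‖x̂^t - x^t‖·‖∇U(x^t) - f^t‖. -/
open RealInnerProductSpace

/-! Along the segment from `x`, the function `t ↦ U (x + t v) - t ⟪v, ∇U x⟫ - (L/2) t² ‖v‖²` has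
derivative `⟪v, ∇U (x + t v) - ∇U x⟫ - L t ‖v‖² ≤ 0` for `t ≥ 0`, so comparing its values at `1`
and `0` gives the descent lemma with constant `L/2`. Applied to `v = γ (x̂ - x)`, and with
`⟪x̂ - x, ∇U x⟫ = ⟪x̂ - x, f⟫ + ⟪x̂ - x, ∇U x - f⟫` bounded by the hypothesis on `f` and
Cauchy–Schwarz, it yields the claim (even with `Lγ/2` in place of `Lγ`). -/

section DescentLemma

variable {E : Type*} [NormedAddCommGroup E] [InnerProductSpace ℝ E]

theorem LipschitzWith.inner_sub_add_smul_le {g : E → E} {K : NNReal} (hg : LipschitzWith K g)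
    (x v : E) {t : ℝ} (ht : 0 ≤ t) :
    ⟪v, g (x + t • v) - g x⟫ ≤ K * t * ‖v‖ ^ 2 :=
  calc ⟪v, g (x + t • v) - g x⟫ ≤ ‖v‖ * ‖g (x + t • v) - g x‖ := real_inner_le_norm _ _
    _ ≤ ‖v‖ * (K * ‖t • v‖) := by
        gcongr
        simpa [dist_eq_norm] using hg.dist_le_mul (x + t • v) x
    _ = K * t * ‖v‖ ^ 2 := by
        rw [norm_smul, Real.norm_of_nonneg ht]; ring

variable [CompleteSpace E]

theorem HasGradientAt.hasDerivAt_add_smul {U : E → ℝ} {G x v : E} {t : ℝ}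
    (hU : HasGradientAt U G (x + t • v)) :
    HasDerivAt (fun s : ℝ => U (x + s • v)) ⟪v, G⟫ t := by
  have hline : HasDerivAt (fun s : ℝ => x + s • v) v t := by
    simpa using ((hasDerivAt_id t).smul_const v).const_add x
  have h : HasDerivAt (fun s : ℝ => U (x + s • v)) (InnerProductSpace.toDual ℝ E G v) t :=
    hU.hasFDerivAt.comp_hasDerivAt t hline
  rwa [InnerProductSpace.toDual_apply_apply, real_inner_comm] at h

theorem le_add_inner_add_of_lipschitzWith_gradient {U : E → ℝ} {g : E → E} {K : NNReal}
    (hU : ∀ y, HasGradientAt U (g y) y) (hg : LipschitzWith K g) (x v : E) :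
    U (x + v) ≤ U x + ⟪v, g x⟫ + K / 2 * ‖v‖ ^ 2 := by
  let φ : ℝ → ℝ := fun t => U (x + t • v) - t * ⟪v, g x⟫ - K / 2 * t ^ 2 * ‖v‖ ^ 2
  have hφ : ∀ t, HasDerivAt φ (⟪v, g (x + t • v) - g x⟫ - K * t * ‖v‖ ^ 2) t := by
    intro t
    refine (((hU (x + t • v)).hasDerivAt_add_smul.sub
      ((hasDerivAt_id t).mul_const ⟪v, g x⟫)).sub
      (((hasDerivAt_pow 2 t).const_mul (K / 2 : ℝ)).mul_const (‖v‖ ^ 2))).congr_deriv ?_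
    rw [inner_sub_right]; push_cast; ring
  have hanti : AntitoneOn φ (Set.Ici 0) := by
    refine antitoneOn_of_hasDerivWithinAt_nonpos (convex_Ici 0)
      (fun t _ => (hφ t).continuousAt.continuousWithinAt)
      (fun t _ => (hφ t).hasDerivWithinAt) fun t ht => ?_
    rw [interior_Ici] at ht
    exact sub_nonpos.mpr (hg.inner_sub_add_smul_le x v (le_of_lt ht))
  have hφ10 : φ 1 ≤ φ 0 := hanti Set.self_mem_Ici (zero_le_one' ℝ) zero_le_one
  norm_num [φ] at hφ10
  linarith

end DescentLemma

theorem stmt3_general {n : ℕ} (U : EuclideanSpace ℝ (Fin n) → ℝ)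
    (g : EuclideanSpace ℝ (Fin n) → EuclideanSpace ℝ (Fin n)) (L : ℝ) (hL : 0 ≤ L)
    (hU : ∀ x, HasGradientAt U (g x) x)
    (hLip : LipschitzWith (Real.toNNReal L) g)
    (x xhat f : EuclideanSpace ℝ (Fin n)) (γ τ : ℝ)
    (hγ0 : 0 < γ)
    (hdesc : ⟪xhat - x, f⟫ ≤ -τ * ‖xhat - x‖ ^ 2) :
    U (x + γ • (xhat - x)) ≤
      U x - γ * (τ - L * γ) * ‖xhat - x‖ ^ 2 + γ * ‖xhat - x‖ * ‖g x - f‖ := by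
  set w := xhat - x
  have hdescent := le_add_inner_add_of_lipschitzWith_gradient hU hLip x (γ • w)
  rw [Real.coe_toNNReal L hL, real_inner_smul_left, norm_smul, Real.norm_of_nonneg hγ0.le]
    at hdescent
  have hinner : ⟪w, g x⟫ ≤ -τ * ‖w‖ ^ 2 + ‖w‖ * ‖g x - f‖ := by
    have hsplit : ⟪w, g x⟫ = ⟪w, f⟫ + ⟪w, g x - f⟫ := by rw [← inner_add_right, add_sub_cancel]
    linarith [real_inner_le_norm w (g x - f)]
  nlinarith [mul_le_mul_of_nonneg_left hinner hγ0.le, mul_nonneg hL (sq_nonneg (γ * ‖w‖))]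

/-- Descent-lemma estimate: if `∇U` is `L`-Lipschitz, `x⁺ = x + γ(x̂ - x)` with
`γ ∈ (0,1]` and `⟨x̂-x, f⟩ ≤ -τ‖x̂-x‖²`, then
`U(x⁺) ≤ U(x) - γ(τ - Lγ)‖x̂-x‖² + γ‖x̂-x‖‖∇U(x)-f‖`. -/
theorem stmt3 {n : ℕ} (U : EuclideanSpace ℝ (Fin n) → ℝ)
    (g : EuclideanSpace ℝ (Fin n) → EuclideanSpace ℝ (Fin n)) (L : ℝ) (hL : 0 ≤ L)
    (hU : ∀ x, HasGradientAt U (g x) x)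
    (hLip : LipschitzWith (Real.toNNReal L) g)
    (x xhat f : EuclideanSpace ℝ (Fin n)) (γ τ : ℝ)
    (hγ0 : 0 < γ) (hγ1 : γ ≤ 1) (hτ : 0 < τ)
    (hdesc : ⟪xhat - x, f⟫ ≤ -τ * ‖xhat - x‖ ^ 2) :
    U (x + γ • (xhat - x)) ≤
      U x - γ * (τ - L * γ) * ‖xhat - x‖ ^ 2 + γ * ‖xhat - x‖ * ‖g x - f‖ :=
  stmt3_general U g L hL hU hLip x xhat f γ τ hγ0 hdesc
end

section
/- Let {a_t} be a sequence of nonnegative reals such that lim inf_{t→∞} a_t = 0 and lim sup_{t→∞} a_t > 0. Then for any δ > 0 with 2δ < lim sup a_t, there exist infinitely many indices t such that a_t < δ and, for each such t, an index i_t > t with a_{i_t} > 2δ and δ ≤ a_n ≤ 2δ for all t < n < i_t. -/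
open Filter

/-! The first index `i > s` at which the sequence exceeds `2δ` is preceded by a last index
`t ∈ [s, i)` at which it is below `δ`; every index strictly between `t` and `i` is then neither
low nor high. Since `a` is frequently below `δ` and frequently above `2δ`, such windows start
beyond any given bound. -/

namespace Nat

variable {P : ℕ → Prop}

theorem exists_first_after {s j : ℕ} (hsj : s < j) (hj : P j) :
    ∃ i, s < i ∧ P i ∧ ∀ n, s < n → n < i → ¬P n := by
  classical
  have hex : ∃ i, s < i ∧ P i := ⟨j, hsj, hj⟩
  obtain ⟨hsi, hi⟩ := Nat.find_spec hex
  exact ⟨Nat.find hex, hsi, hi, fun n hsn hni hn => Nat.find_min hex hni ⟨hsn, hn⟩⟩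

theorem exists_last_before {s i : ℕ} (hs : P s) (hsi : s < i) :
    ∃ t, s ≤ t ∧ t < i ∧ P t ∧ ∀ n, t < n → n < i → ¬P n := by
  classical
  have hsi' : s ≤ i - 1 := Nat.le_sub_one_of_lt hsi
  refine ⟨Nat.findGreatest P (i - 1), Nat.le_findGreatest hsi' hs,
    (Nat.findGreatest_le _).trans_lt (by omega), Nat.findGreatest_spec hsi' hs, ?_⟩
  intro n htn hni
  exact Nat.findGreatest_is_greatest htn (Nat.le_sub_one_of_lt hni)

theorem exists_crossing_window {Q : ℕ → Prop} {s j : ℕ} (hs : P s) (hsj : s < j) (hj : Q j) :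
    ∃ t, s ≤ t ∧ P t ∧ ∃ i, t < i ∧ Q i ∧ ∀ n, t < n → n < i → ¬P n ∧ ¬Q n := by
  obtain ⟨i, hsi, hi, hQ⟩ := exists_first_after hsj hj
  obtain ⟨t, hst, hti, ht, hP⟩ := exists_last_before hs hsi
  exact ⟨t, hst, ht, i, hti, hi, fun n htn hni =>
    ⟨hP n htn hni, hQ n (hst.trans_lt htn) hni⟩⟩

end Nat

theorem stmt5_general (a : ℕ → ℝ)
    (hliminf : ∀ ε > 0, ∃ᶠ t in atTop, a t < ε)
    (δ : ℝ) (hδ : 0 < δ) (hlimsup : ∃ᶠ t in atTop, 2 * δ < a t) :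
    ∃ᶠ t in atTop, a t < δ ∧
      ∃ i, t < i ∧ 2 * δ < a i ∧ ∀ n, t < n → n < i → δ ≤ a n ∧ a n ≤ 2 * δ := by
  rw [frequently_atTop]
  intro N
  obtain ⟨s, hNs, hs⟩ := frequently_atTop.1 (hliminf δ hδ) N
  obtain ⟨j, hsj, hj⟩ := frequently_atTop.1 hlimsup (s + 1)
  obtain ⟨t, hst, ht, i, hti, hi, hmid⟩ :=
    Nat.exists_crossing_window (P := (a · < δ)) (Q := (2 * δ < a ·)) hs hsj hj
  refine ⟨t, hNs.trans hst, ht, i, hti, hi, fun n htn hni => ?_⟩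
  obtain ⟨hlow, hhigh⟩ := hmid n htn hni
  exact ⟨not_lt.1 hlow, not_lt.1 hhigh⟩

/-- Crossing windows: if a nonnegative sequence has `lim inf = 0` (i.e. it is
frequently below every `ε > 0`) and is frequently above `2δ` (i.e. `2δ < lim sup`),
then there are infinitely many indices `t` with `a_t < δ`, a later index `i_t`
with `a_{i_t} > 2δ`, and all intermediate values trapped in `[δ, 2δ]`. -/
theorem stmt5 (a : ℕ → ℝ) (ha : ∀ t, 0 ≤ a t)
    (hliminf : ∀ ε > 0, ∃ᶠ t in atTop, a t < ε)
    (δ : ℝ) (hδ : 0 < δ) (hlimsup : ∃ᶠ t in atTop, 2 * δ < a t) :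
    ∃ᶠ t in atTop, a t < δ ∧
      ∃ i, t < i ∧ 2 * δ < a i ∧ ∀ n, t < n → n < i → δ ≤ a n ∧ a n ≤ 2 * δ :=
  stmt5_general a hliminf δ hδ hlimsup
end

section
/- Let X̄ be a Hermitian n×n matrix, Z a Hermitian k×k matrix (k ≤ n), τ > 0, P > 0, and Q = {X Hermitian PSD : tr(X) ≤ P}. Then the maximizer over Q of -τ‖X - X̄‖² - ⟨Z, X₁₁⟩ (X₁₁ the leading k×k block of X) is X(Z) = [ X̄ - (1/(2τ))(μ* I + diag(Z, 0)) ]⁺, where [·]⁺ denotes projection onto the PSD cone and μ* ≥ 0 satisfies the complementarity condition 0 ≤ μ* ⊥ tr(X(Z)) - P ≤ 0. -/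
/-!
Completing the square, the objective equals `-τ‖X - M‖² + μ tr X` up to a constant, where
`M = X̄ - (2τ)⁻¹(μI + diag(Z, 0))` and `⟨diag(Z, 0), X⟩ = ⟨Z, X₁₁⟩`. The projection `[M]⁺`
maximizes the first term over the PSD cone, and on `Q` the second term is at most `μP`, a value
it attains at `[M]⁺` by complementarity.
-/

open Matrix ComplexOrder

namespace LinearMap.BilinForm

variable {E : Type*} [AddCommGroup E] [Module ℝ E] {B : LinearMap.BilinForm ℝ E}

lemma neg_mul_apply_sub_add_eq (hB : B.IsSymm) {τ : ℝ} (hτ : τ ≠ 0) (c g x : E) :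
    -τ * B (x - c) (x - c) + B g x =
      -τ * B (x - (c + (2 * τ)⁻¹ • g)) (x - (c + (2 * τ)⁻¹ • g))
        + (B g c + B g g / (4 * τ)) := by
  simp only [map_sub, map_add, map_smul, LinearMap.sub_apply, LinearMap.add_apply,
    LinearMap.smul_apply, smul_eq_mul]
  rw [hB.eq x g, hB.eq c g, hB.eq x c]
  field_simp
  ring

theorem isMaxOn_inter_of_isMinOn_of_complementarity (hB : B.IsSymm) {τ μ P : ℝ} (hτ : 0 < τ)
    (hμ : 0 ≤ μ) {S : Set E} {c u w a : E}
    (ha : IsMinOn (fun x => B (x - (c - (2 * τ)⁻¹ • (μ • u + w)))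
      (x - (c - (2 * τ)⁻¹ • (μ • u + w)))) S a)
    (hcomp : μ * (B u a - P) = 0) :
    IsMaxOn (fun x => -τ * B (x - c) (x - c) - B w x) (S ∩ {x | B u x ≤ P}) a := by
  set m := c - (2 * τ)⁻¹ • (μ • u + w)
  obtain ⟨K, hK⟩ : ∃ K, ∀ x, -τ * B (x - c) (x - c) - B w x
      = -τ * B (x - m) (x - m) + μ * B u x + K := by
    refine ⟨B (-(μ • u + w)) c + B (-(μ • u + w)) (-(μ • u + w)) / (4 * τ), fun x => ?_⟩
    have hm : m = c + (2 * τ)⁻¹ • -(μ • u + w) := by rw [smul_neg, ← sub_eq_add_neg]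
    have hg : B (-(μ • u + w)) x = -(μ * B u x) - B w x := by
      simp only [map_neg, map_add, map_smul, LinearMap.neg_apply, LinearMap.add_apply,
        LinearMap.smul_apply, smul_eq_mul]
      ring
    rw [hm]
    linear_combination neg_mul_apply_sub_add_eq hB hτ.ne' c (-(μ • u + w)) x - hg
  rintro x ⟨hxS, hxP⟩
  have hdist : B (a - m) (a - m) ≤ B (x - m) (x - m) := ha hxS
  have hμx : μ * B u x ≤ μ * B u a := by
    linear_combination mul_le_mul_of_nonneg_left (show B u x ≤ P from hxP) hμ - hcomp
  show -τ * B (x - c) (x - c) - B w x ≤ -τ * B (a - c) (a - c) - B w a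
  rw [hK, hK]
  linarith [mul_le_mul_of_nonneg_left hdist hτ.le]

end LinearMap.BilinForm

namespace Matrix

variable {ι κ m n 𝕜 : Type*} [Fintype m] [Fintype n] [RCLike 𝕜]

noncomputable def frobeniusBilinForm : LinearMap.BilinForm ℝ (Matrix m n 𝕜) :=
  LinearMap.mk₂ ℝ (fun A B => RCLike.re (Aᴴ * B).trace)
    (fun A₁ A₂ B => by rw [conjTranspose_add, Matrix.add_mul, trace_add, map_add])
    (fun r A B => by
      rw [conjTranspose_smul, star_trivial, Matrix.smul_mul, trace_smul, RCLike.smul_re,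
        smul_eq_mul])
    (fun A B₁ B₂ => by rw [Matrix.mul_add, trace_add, map_add])
    (fun r A B => by rw [Matrix.mul_smul, trace_smul, RCLike.smul_re, smul_eq_mul])

lemma frobeniusBilinForm_apply (A B : Matrix m n 𝕜) :
    frobeniusBilinForm A B = RCLike.re (Aᴴ * B).trace := rfl

lemma frobeniusBilinForm_isSymm :
    (frobeniusBilinForm : LinearMap.BilinForm ℝ (Matrix m n 𝕜)).IsSymm := by
  refine LinearMap.BilinForm.isSymm_def.mpr fun A B => ?_
  rw [frobeniusBilinForm_apply, frobeniusBilinForm_apply, ← conjTranspose_conjTranspose B,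
    ← conjTranspose_mul, trace_conjTranspose, conjTranspose_conjTranspose, RCLike.star_def,
    RCLike.conj_re]

lemma frobeniusBilinForm_one_left [DecidableEq n] (X : Matrix n n 𝕜) :
    frobeniusBilinForm 1 X = RCLike.re X.trace := by
  simp [frobeniusBilinForm_apply]

lemma trace_conjTranspose_mul_submatrix [Fintype ι] [Fintype κ] {R : Type*} [Semiring R]
    [StarRing R] {e : ι → κ} (he : Function.Injective e) (Z : Matrix ι ι R) (W : Matrix κ κ R)
    (hW : ∀ i j, W (e i) (e j) = Z i j)
    (hW₀ : ∀ a b, a ∉ Set.range e ∨ b ∉ Set.range e → W a b = 0) (X : Matrix κ κ R) :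
    (Zᴴ * X.submatrix e e).trace = (Wᴴ * X).trace := by
  simp only [trace, diag, mul_apply, conjTranspose_apply, submatrix_apply]
  refine Fintype.sum_of_injective e he _ _ (fun a ha => ?_) (fun i => ?_)
  · exact Finset.sum_eq_zero fun b _ => by rw [hW₀ b a (Or.inr ha), star_zero, zero_mul]
  · refine Fintype.sum_of_injective e he _ _ (fun b hb => ?_) (fun j => ?_)
    · rw [hW₀ b (e i) (Or.inl hb), star_zero, zero_mul]
    · rw [hW]

end Matrix

theorem stmt8_general {n k : ℕ} (hk : k ≤ n)
    (Xbar : Matrix (Fin n) (Fin n) ℂ)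
    (Z : Matrix (Fin k) (Fin k) ℂ)
    (τ P : ℝ) (hτ : 0 < τ)
    (μ : ℝ) (hμ : 0 ≤ μ)
    (Zfull : Matrix (Fin n) (Fin n) ℂ)
    (hZfull : Zfull = Matrix.of fun (i j : Fin n) =>
      if hi : (i : ℕ) < k then if hj : (j : ℕ) < k then Z ⟨i, hi⟩ ⟨j, hj⟩ else 0 else 0)
    (M : Matrix (Fin n) (Fin n) ℂ)
    (hM : M = Xbar - (1 / (2 * τ)) • (μ • (1 : Matrix (Fin n) (Fin n) ℂ) + Zfull))
    (Xz : Matrix (Fin n) (Fin n) ℂ)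
    -- `Xz = [M]⁺`, the projection of `M` onto the PSD cone in Frobenius norm
    (hproj : IsMinOn (fun X : Matrix (Fin n) (Fin n) ℂ => (((X - M)ᴴ * (X - M)).trace).re)
      {X | X.PosSemidef} Xz)
    (hcomp : μ * ((Xz.trace).re - P) = 0) :
    IsMaxOn (fun X : Matrix (Fin n) (Fin n) ℂ =>
        -τ * (((X - Xbar)ᴴ * (X - Xbar)).trace).re
          - ((Zᴴ * X.submatrix (Fin.castLE hk) (Fin.castLE hk)).trace).re)
      {X | X.PosSemidef ∧ (X.trace).re ≤ P} Xz := by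
  have hblock (X : Matrix (Fin n) (Fin n) ℂ) :
      (Zᴴ * X.submatrix (Fin.castLE hk) (Fin.castLE hk)).trace = (Zfullᴴ * X).trace := by
    refine trace_conjTranspose_mul_submatrix (Fin.castLE_injective hk) Z Zfull
      (fun i j => by simp [hZfull]) (fun a b hab => ?_) X
    simp only [Fin.range_castLE, Set.mem_ofPred_eq, not_lt] at hab
    rcases hab with ha | hb
    · simp [hZfull, Nat.not_lt.mpr ha]
    · simp [hZfull, Nat.not_lt.mpr hb]
  simp only [hblock]
  rw [one_div] at hM
  subst hM
  have h := LinearMap.BilinForm.isMaxOn_inter_of_isMinOn_of_complementarity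
    frobeniusBilinForm_isSymm hτ hμ (E := Matrix (Fin n) (Fin n) ℂ) (u := 1) hproj
    (by rwa [frobeniusBilinForm_one_left])
  simp only [frobeniusBilinForm_one_left] at h
  simp only [frobeniusBilinForm_apply] at h
  exact h

/-- Lemma 2(i): the maximizer over `Q = {X ⪰ 0 : tr X ≤ P}` of
`-τ‖X - X̄‖² - ⟨Z, X₁₁⟩` is the PSD projection
`X(Z) = [X̄ - (1/(2τ))(μ* I + diag(Z,0))]⁺`, where `μ* ≥ 0` satisfies the
complementarity condition `0 ≤ μ* ⊥ tr(X(Z)) - P ≤ 0`.  The projection is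
characterized as the Frobenius-nearest PSD matrix. -/
theorem stmt8 {n k : ℕ} (hk : k ≤ n)
    (Xbar : Matrix (Fin n) (Fin n) ℂ) (hXbar : Xbar.IsHermitian)
    (Z : Matrix (Fin k) (Fin k) ℂ) (hZ : Z.IsHermitian)
    (τ P : ℝ) (hτ : 0 < τ) (hP : 0 < P)
    (μ : ℝ) (hμ : 0 ≤ μ)
    (Zfull : Matrix (Fin n) (Fin n) ℂ)
    (hZfull : Zfull = Matrix.of fun (i j : Fin n) =>
      if hi : (i : ℕ) < k then if hj : (j : ℕ) < k then Z ⟨i, hi⟩ ⟨j, hj⟩ else 0 else 0)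
    (M : Matrix (Fin n) (Fin n) ℂ)
    (hM : M = Xbar - (1 / (2 * τ)) • (μ • (1 : Matrix (Fin n) (Fin n) ℂ) + Zfull))
    (Xz : Matrix (Fin n) (Fin n) ℂ) (hXzPSD : Xz.PosSemidef)
    -- `Xz = [M]⁺`, the projection of `M` onto the PSD cone in Frobenius norm
    (hproj : IsMinOn (fun X : Matrix (Fin n) (Fin n) ℂ => (((X - M)ᴴ * (X - M)).trace).re)
      {X | X.PosSemidef} Xz)
    (htr : (Xz.trace).re ≤ P) (hcomp : μ * ((Xz.trace).re - P) = 0) :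
    IsMaxOn (fun X : Matrix (Fin n) (Fin n) ℂ =>
        -τ * (((X - Xbar)ᴴ * (X - Xbar)).trace).re
          - ((Zᴴ * X.submatrix (Fin.castLE hk) (Fin.castLE hk)).trace).re)
      {X | X.PosSemidef ∧ (X.trace).re ≤ P} Xz :=
  stmt8_general hk Xbar Z τ P hτ μ hμ Zfull hZfull M hM Xz hproj hcomp
end
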